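/- arXiv:2112.11995 — 3 statements merged into one kernel-verified Lean document; each statement's English description precedes it below -/
import Mathlib

section
/- Let 𝕂 be a field of characteristic different from 2, M a 𝕂-vector space, α, β : M → M commuting linear maps, and f : M × M → M a bilinear map satisfying f(β(a), α(b)) = −f(β(b), α(a)) for all a, b ∈ M. Then (M, f, α, β) is a BiHom-Lie algebra if and only if [f, f] = 0. -/
/- Basic notions for BiHom-Lie algebras. -/

section Core

variable {K : Type*} [Field K]
variable {M : Type*} [AddCommGroup M] [Module K M]

/-- The trilinear operation `f∘g` associated to two bilinear maps `f g` and
twisting maps `α β`: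
`(f∘g)(a,b,c) = f(β²(a), g(β(b), α(c))) + f(β²(b), g(β(c), α(a))) + f(β²(c), g(β(a), α(b)))`. -/
def bhCirc (α β : M →ₗ[K] M) (f g : M →ₗ[K] M →ₗ[K] M) (a b c : M) : M :=
  f (β (β a)) (g (β b) (α c)) + f (β (β b)) (g (β c) (α a)) + f (β (β c)) (g (β a) (α b))

/-- The bracket `[f,g] = f∘g + g∘f` of bilinear maps. -/
def bhBrk (α β : M →ₗ[K] M) (f g : M →ₗ[K] M →ₗ[K] M) (a b c : M) : M :=
  bhCirc α β f g a b c + bhCirc α β g f a b c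

/-- `(M, d, α, β)` is a BiHom-Lie algebra: `α∘β = β∘α`, BiHom-skew-symmetry and
the BiHom-Jacobi condition. -/
def IsBiHomLie (d : M →ₗ[K] M →ₗ[K] M) (α β : M →ₗ[K] M) : Prop :=
  (∀ m, α (β m) = β (α m)) ∧
  (∀ x y, d (β x) (α y) = - d (β y) (α x)) ∧
  (∀ x y z,
    d (β (β x)) (d (β y) (α z)) + d (β (β y)) (d (β z) (α x)) +
      d (β (β z)) (d (β x) (α y)) = 0)

/-- Multiplicativity: `α` and `β` are algebra morphisms for the bracket `d`. -/
def IsMultiplicative (d : M →ₗ[K] M →ₗ[K] M) (α β : M →ₗ[K] M) : Prop :=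
  (∀ x y, α (d x y) = d (α x) (α y)) ∧ (∀ x y, β (d x y) = d (β x) (β y))

end Core

section Morph

variable {K : Type*} [Field K]
variable {M : Type*} [AddCommGroup M] [Module K M]
variable {N : Type*} [AddCommGroup N] [Module K N]

/-- A morphism of BiHom-Lie algebras. -/
def IsBHMorphism (d : M →ₗ[K] M →ₗ[K] M) (α β : M →ₗ[K] M)
    (d' : N →ₗ[K] N →ₗ[K] N) (α' β' : N →ₗ[K] N) (f : M →ₗ[K] N) : Prop :=
  (∀ m, f (α m) = α' (f m)) ∧ (∀ m, f (β m) = β' (f m)) ∧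
  (∀ m n, f (d m n) = d' (f m) (f n))

end Morph

section RepCo

variable {K : Type*} [Field K]
variable {L : Type*} [AddCommGroup L] [Module K L]
variable {V : Type*} [AddCommGroup V] [Module K V]

/-- A representation of the BiHom-Lie algebra `(L, δ, α, β)` on `(V, αV, βV)` given by a
left action `lam_l` and a right action `lam_r`. -/
def IsBHRep (δ : L →ₗ[K] L →ₗ[K] L) (α β : L →ₗ[K] L) (αV βV : V →ₗ[K] V)
    (lam_l : L →ₗ[K] V →ₗ[K] V) (lam_r : V →ₗ[K] L →ₗ[K] V) : Prop :=
  (∀ (v : V) (y : L), lam_r (βV v) (α y) = - lam_l (β y) (αV v)) ∧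
  (∀ (x y : L) (v : V),
    lam_r (βV (βV v)) (δ (β x) (α y)) =
      lam_l (β (β x)) (lam_r (βV v) (α y)) + lam_l (β (β y)) (lam_r (βV v) (α x)))

/-- A `2`-cocycle of `(L, δ, α, β)` with values in `V`, relative to the left action `lam_l`. -/
def IsBH2Cocycle (δ : L →ₗ[K] L →ₗ[K] L) (α β : L →ₗ[K] L)
    (lam_l : L →ₗ[K] V →ₗ[K] V) (θ : L →ₗ[K] L →ₗ[K] V) : Prop :=
  (∀ x y, θ (β x) (α y) = - θ (β y) (α x)) ∧
  (∀ x y z,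
    θ (β (β x)) (δ (β y) (α z)) - θ (β (β y)) (δ (β x) (α z)) +
      θ (β (β z)) (δ (β x) (α y)) +
      lam_l (β (β x)) (θ (β y) (α z)) - lam_l (β (β y)) (θ (β x) (α z)) +
      lam_l (β (β z)) (θ (β x) (α y)) = 0)

/-- A `1`-cochain: a linear map commuting with the structure maps. -/
def IsBH1Cochain (α β : L →ₗ[K] L) (αV βV : V →ₗ[K] V) (h : L →ₗ[K] V) : Prop :=
  (∀ x, h (α x) = αV (h x)) ∧ (∀ x, h (β x) = βV (h x))

/-- The `1`-coboundary operator: `D₁(h)(x,y) = -h(δ(x,y)) + λ_l(x, h(y)) + λ_r(h(x), y)`. -/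
def bhD1 (δ : L →ₗ[K] L →ₗ[K] L) (lam_l : L →ₗ[K] V →ₗ[K] V)
    (lam_r : V →ₗ[K] L →ₗ[K] V) (h : L →ₗ[K] V) : L →ₗ[K] L →ₗ[K] V :=
  LinearMap.mk₂ K (fun x y => - h (δ x y) + lam_l x (h y) + lam_r (h x) y)
    (by intro m₁ m₂ n; simp [map_add]; abel)
    (by intro c m n; simp [map_smul, smul_add, smul_neg])
    (by intro m n₁ n₂; simp [map_add]; abel)
    (by intro c m n; simp [map_smul, smul_add, smul_neg])

/-- The bilinear map on `L ⊕ V` determined by data `δ, λ_l, λ_r, θ, μ`: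
`d(x+v, y+w) = δ(x,y) + θ(x,y) + λ_l(x,w) + λ_r(v,y) + μ(v,w)`. -/
def bhStd (δ : L →ₗ[K] L →ₗ[K] L) (lam_l : L →ₗ[K] V →ₗ[K] V)
    (lam_r : V →ₗ[K] L →ₗ[K] V) (θ : L →ₗ[K] L →ₗ[K] V) (μ : V →ₗ[K] V →ₗ[K] V) :
    (L × V) →ₗ[K] (L × V) →ₗ[K] (L × V) :=
  LinearMap.mk₂ K
    (fun p q => (δ p.1 q.1, θ p.1 q.1 + lam_l p.1 q.2 + lam_r p.2 q.1 + μ p.2 q.2))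
    (by intro m₁ m₂ n; simp [Prod.ext_iff, map_add]; abel)
    (by intro c m n; simp [Prod.ext_iff, map_smul, smul_add])
    (by intro m n₁ n₂; simp [Prod.ext_iff, map_add]; abel)
    (by intro c m n; simp [Prod.ext_iff, map_smul, smul_add])

end RepCo

section Ext

variable {K : Type*} [Field K]
variable {V : Type*} [AddCommGroup V] [Module K V]
variable {M : Type*} [AddCommGroup M] [Module K M]
variable {L : Type*} [AddCommGroup L] [Module K L]

/-- `0 → (V,μ,αV,βV) →ⁱ (M,d,αM,βM) →^π (L,δ,α,β) → 0` is an extension of BiHom-Lie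
algebras: all three are BiHom-Lie algebras, `i, π` are morphisms, `i` injective,
`π` surjective, and `Im i = ker π`. -/
def IsBHExtension (μ : V →ₗ[K] V →ₗ[K] V) (αV βV : V →ₗ[K] V)
    (d : M →ₗ[K] M →ₗ[K] M) (αM βM : M →ₗ[K] M)
    (δ : L →ₗ[K] L →ₗ[K] L) (α β : L →ₗ[K] L)
    (i : V →ₗ[K] M) (π : M →ₗ[K] L) : Prop :=
  IsBiHomLie μ αV βV ∧ IsBiHomLie d αM βM ∧ IsBiHomLie δ α β ∧
  IsBHMorphism μ αV βV d αM βM i ∧ IsBHMorphism d αM βM δ α β π ∧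
  Function.Injective i ∧ Function.Surjective π ∧ LinearMap.range i = LinearMap.ker π

/-- The extension is split: there is a BiHom-subalgebra of `M` complementary to `ker π`. -/
def IsBHSplit (d : M →ₗ[K] M →ₗ[K] M) (αM βM : M →ₗ[K] M) (π : M →ₗ[K] L) : Prop :=
  ∃ S : Submodule K M, (∀ m ∈ S, αM m ∈ S) ∧ (∀ m ∈ S, βM m ∈ S) ∧
    (∀ m ∈ S, ∀ n ∈ S, d m n ∈ S) ∧ IsCompl S (LinearMap.ker π)

end Ext

section BiHomBracket

variable {K : Type*} [Field K] {M : Type*} [AddCommGroup M] [Module K M]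
  (α β : M →ₗ[K] M) (f : M →ₗ[K] M →ₗ[K] M)

theorem bhBrk_self (a b c : M) : bhBrk α β f f a b c = (2 : K) • bhCirc α β f f a b c :=
  (two_smul K _).symm

theorem bhBrk_self_eq_zero_iff (h2 : (2 : K) ≠ 0) (a b c : M) :
    bhBrk α β f f a b c = 0 ↔ bhCirc α β f f a b c = 0 := by
  rw [bhBrk_self, smul_eq_zero_iff_right h2]

end BiHomBracket

/-- Over a field of characteristic ≠ 2, if `α, β` commute and the bilinear
map `f` satisfies `f(β(a), α(b)) = -f(β(b), α(a))`, then `(M, f, α, β)` is a BiHom-Lie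
algebra if and only if `[f, f] = 0`. -/
theorem stmt0 {K : Type*} [Field K] (h2 : (2 : K) ≠ 0)
    {M : Type*} [AddCommGroup M] [Module K M]
    (α β : M →ₗ[K] M) (f : M →ₗ[K] M →ₗ[K] M)
    (hcomm : ∀ m, α (β m) = β (α m))
    (hskew : ∀ a b, f (β a) (α b) = - f (β b) (α a)) :
    IsBiHomLie f α β ↔ ∀ a b c, bhBrk α β f f a b c = 0 := by
  simp only [bhBrk_self_eq_zero_iff α β f h2]
  -- `bhCirc α β f f` is by definition the BiHom-Jacobiator of `f`.
  exact ⟨fun hlie => hlie.2.2, fun hjac => ⟨hcomm, hskew, hjac⟩⟩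
end

section
/- Let (L, δ, α, β) be a multiplicative BiHom-Lie algebra, (V, λ_l, λ_r, α_V, β_V) a representation of L on V, and h : L → V a 1-cochain. Then D₁(h) is skew-symmetric in the BiHom sense: D₁(h)(β(x), α(y)) = −D₁(h)(β(y), α(x)) for all x, y ∈ L. -/
section Coboundary

variable {K : Type*} [Field K]
variable {L : Type*} [AddCommGroup L] [Module K L]
variable {V : Type*} [AddCommGroup V] [Module K V]

@[simp]
theorem bhD1_apply (δ : L →ₗ[K] L →ₗ[K] L) (lam_l : L →ₗ[K] V →ₗ[K] V)
    (lam_r : V →ₗ[K] L →ₗ[K] V) (h : L →ₗ[K] V) (x y : L) :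
    bhD1 δ lam_l lam_r h x y = - h (δ x y) + lam_l x (h y) + lam_r (h x) y :=
  rfl

theorem bhD1_apply_twisted {δ : L →ₗ[K] L →ₗ[K] L} {α β : L →ₗ[K] L} {αV βV : V →ₗ[K] V}
    (lam_l : L →ₗ[K] V →ₗ[K] V) (lam_r : V →ₗ[K] L →ₗ[K] V) {h : L →ₗ[K] V}
    (hh : IsBH1Cochain α β αV βV h) (x y : L) :
    bhD1 δ lam_l lam_r h (β x) (α y) =
      - h (δ (β x) (α y)) + lam_l (β x) (αV (h y)) + lam_r (βV (h x)) (α y) := by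
  rw [bhD1_apply, hh.1, hh.2]

/-- Each of the three terms of `D₁(h)` is skew on its own: the first by skew-symmetry of `δ`,
while the skew-symmetry axiom of the representation exchanges the two action terms. -/
theorem bhD1_skew {δ : L →ₗ[K] L →ₗ[K] L} {α β : L →ₗ[K] L} {αV βV : V →ₗ[K] V}
    {lam_l : L →ₗ[K] V →ₗ[K] V} {lam_r : V →ₗ[K] L →ₗ[K] V} {h : L →ₗ[K] V}
    (hδ : ∀ x y, δ (β x) (α y) = - δ (β y) (α x))
    (hrep : ∀ (v : V) (y : L), lam_r (βV v) (α y) = - lam_l (β y) (αV v))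
    (hh : IsBH1Cochain α β αV βV h) (x y : L) :
    bhD1 δ lam_l lam_r h (β x) (α y) = - bhD1 δ lam_l lam_r h (β y) (α x) := by
  rw [bhD1_apply_twisted lam_l lam_r hh, bhD1_apply_twisted lam_l lam_r hh, hδ x y,
    hrep (h x) y, hrep (h y) x, map_neg]
  abel

end Coboundary

theorem stmt7_general {K : Type*} [Field K]
    {L : Type*} [AddCommGroup L] [Module K L]
    {V : Type*} [AddCommGroup V] [Module K V]
    (δ : L →ₗ[K] L →ₗ[K] L) (α β : L →ₗ[K] L)
    (hL : IsBiHomLie δ α β)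
    (αV βV : V →ₗ[K] V)
    (lam_l : L →ₗ[K] V →ₗ[K] V) (lam_r : V →ₗ[K] L →ₗ[K] V)
    (hrep : IsBHRep δ α β αV βV lam_l lam_r)
    (h : L →ₗ[K] V) (hh : IsBH1Cochain α β αV βV h) :
    ∀ x y : L,
      bhD1 δ lam_l lam_r h (β x) (α y) = - bhD1 δ lam_l lam_r h (β y) (α x) :=
  bhD1_skew hL.2.1 hrep.1 hh

/-- For a multiplicative BiHom-Lie algebra `(L, δ, α, β)`, a representation
`(V, λ_l, λ_r, αV, βV)` and a `1`-cochain `h : L → V`, the coboundary `D₁(h)` is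
skew-symmetric in the BiHom sense: `D₁(h)(β(x), α(y)) = -D₁(h)(β(y), α(x))`. -/
theorem stmt7 {K : Type*} [Field K]
    {L : Type*} [AddCommGroup L] [Module K L]
    {V : Type*} [AddCommGroup V] [Module K V]
    (δ : L →ₗ[K] L →ₗ[K] L) (α β : L →ₗ[K] L)
    (hL : IsBiHomLie δ α β) (hLmul : IsMultiplicative δ α β)
    (αV βV : V →ₗ[K] V) (hVcomm : ∀ v, αV (βV v) = βV (αV v))
    (lam_l : L →ₗ[K] V →ₗ[K] V) (lam_r : V →ₗ[K] L →ₗ[K] V)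
    (hrep : IsBHRep δ α β αV βV lam_l lam_r)
    (h : L →ₗ[K] V) (hh : IsBH1Cochain α β αV βV h) :
    ∀ x y : L,
      bhD1 δ lam_l lam_r h (β x) (α y) = - bhD1 δ lam_l lam_r h (β y) (α x) :=
  stmt7_general δ α β hL αV βV lam_l lam_r hrep h hh
end

section
/- Let (L, δ, α, β) be a multiplicative BiHom-Lie algebra, (V, λ_l, λ_r, α_V, β_V) a representation of L on V, and let θ and θ' be 2-cocycles of L on V with θ' = θ + D₁(h) for some 1-cochain h : L → V. Then the map Φ : L ⊕ V → L ⊕ V defined by Φ(x + v) = x − h(x) + v is an isomorphism of BiHom-Lie algebras from (L ⊕ V, d_θ, α + α_V, β + β_V) to (L ⊕ V, d_{θ'}, α + α_V, β + β_V), where d_θ(x + v, y + w) = δ(x, y) + θ(x, y) + λ_l(x, w) + λ_r(v, y) and similarly for d_{θ'}; together with the identity maps on V and L, Φ gives an equivalence of the standard split abelian extensions determined by θ and θ'. -/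
/-!
The shear `Φ(x, v) = (x, v - h x)` has inverse `(x, v) ↦ (x, v + h x)`, and it commutes with
`α + αV` and `β + βV` because `h` does. On brackets, the `V`-component of `Φ (d_θ(x + v, y + w))`
is `θ(x, y) + λ_l(x, w) + λ_r(v, y) - h(δ(x, y))`; expanding `d_{θ'}(Φ(x + v), Φ(y + w))` with
`θ' = θ + D₁(h)`, the terms `λ_l(x, h y)` and `λ_r(h x, y)` coming from `D₁(h)` cancel those coming
from `Φ`, leaving the same expression.
-/

section Shear

variable {K : Type*} [Field K]
variable {L : Type*} [AddCommGroup L] [Module K L]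
variable {V : Type*} [AddCommGroup V] [Module K V]

def shear (h : L →ₗ[K] V) : L × V →ₗ[K] L × V :=
  LinearMap.prod (LinearMap.fst K L V) (LinearMap.snd K L V - h ∘ₗ LinearMap.fst K L V)

@[simp]
theorem shear_apply (h : L →ₗ[K] V) (p : L × V) : shear h p = (p.1, p.2 - h p.1) := rfl

@[simp]
theorem bhStd_apply (δ : L →ₗ[K] L →ₗ[K] L) (lam_l : L →ₗ[K] V →ₗ[K] V)
    (lam_r : V →ₗ[K] L →ₗ[K] V) (θ : L →ₗ[K] L →ₗ[K] V) (μ : V →ₗ[K] V →ₗ[K] V)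
    (p q : L × V) :
    bhStd δ lam_l lam_r θ μ p q =
      (δ p.1 q.1, θ p.1 q.1 + lam_l p.1 q.2 + lam_r p.2 q.1 + μ p.2 q.2) := rfl

theorem bijective_shear (h : L →ₗ[K] V) : Function.Bijective (shear h) :=
  Function.bijective_iff_has_inverse.mpr
    ⟨shear (-h), fun p => by simp, fun p => by simp⟩

theorem shear_prodMap {f : L →ₗ[K] L} {g : V →ₗ[K] V} {h : L →ₗ[K] V}
    (hfg : ∀ x, h (f x) = g (h x)) (p : L × V) :
    shear h (LinearMap.prodMap f g p) = LinearMap.prodMap f g (shear h p) := by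
  simp [hfg]

theorem shear_bhStd {δ : L →ₗ[K] L →ₗ[K] L} {lam_l : L →ₗ[K] V →ₗ[K] V}
    {lam_r : V →ₗ[K] L →ₗ[K] V} {θ θ' : L →ₗ[K] L →ₗ[K] V} {h : L →ₗ[K] V}
    (hθθ' : ∀ x y, θ' x y = θ x y + bhD1 δ lam_l lam_r h x y) (p q : L × V) :
    shear h (bhStd δ lam_l lam_r θ 0 p q) =
      bhStd δ lam_l lam_r θ' 0 (shear h p) (shear h q) := by
  simp only [shear_apply, bhStd_apply, hθθ', bhD1_apply, LinearMap.zero_apply, map_sub,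
    LinearMap.sub_apply, Prod.mk.injEq, true_and]
  abel

theorem isBHMorphism_shear {δ : L →ₗ[K] L →ₗ[K] L} {α β : L →ₗ[K] L} {αV βV : V →ₗ[K] V}
    {lam_l : L →ₗ[K] V →ₗ[K] V} {lam_r : V →ₗ[K] L →ₗ[K] V} {θ θ' : L →ₗ[K] L →ₗ[K] V}
    {h : L →ₗ[K] V} (hh : IsBH1Cochain α β αV βV h)
    (hθθ' : ∀ x y, θ' x y = θ x y + bhD1 δ lam_l lam_r h x y) :
    IsBHMorphism (bhStd δ lam_l lam_r θ 0) (LinearMap.prodMap α αV) (LinearMap.prodMap β βV)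
      (bhStd δ lam_l lam_r θ' 0) (LinearMap.prodMap α αV) (LinearMap.prodMap β βV)
      (shear h) :=
  ⟨shear_prodMap hh.1, shear_prodMap hh.2, shear_bhStd hθθ'⟩

end Shear

theorem stmt11_general {K : Type*} [Field K]
    {L : Type*} [AddCommGroup L] [Module K L]
    {V : Type*} [AddCommGroup V] [Module K V]
    (δ : L →ₗ[K] L →ₗ[K] L) (α β : L →ₗ[K] L)
    (αV βV : V →ₗ[K] V)
    (lam_l : L →ₗ[K] V →ₗ[K] V) (lam_r : V →ₗ[K] L →ₗ[K] V)
    (θ θ' : L →ₗ[K] L →ₗ[K] V)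
    (h : L →ₗ[K] V) (hh : IsBH1Cochain α β αV βV h)
    (hθθ' : ∀ x y, θ' x y = θ x y + bhD1 δ lam_l lam_r h x y) :
    -- Φ(x + v) = x - h(x) + v, i.e. Φ(x, v) = (x, v - h(x))
    Function.Bijective
      (LinearMap.prod (LinearMap.fst K L V)
        (LinearMap.snd K L V - h ∘ₗ LinearMap.fst K L V)) ∧
    IsBHMorphism (bhStd δ lam_l lam_r θ 0)
      (LinearMap.prodMap α αV) (LinearMap.prodMap β βV)
      (bhStd δ lam_l lam_r θ' 0)
      (LinearMap.prodMap α αV) (LinearMap.prodMap β βV)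
      (LinearMap.prod (LinearMap.fst K L V)
        (LinearMap.snd K L V - h ∘ₗ LinearMap.fst K L V)) ∧
    -- Φ ∘ i₀ = i₀ ∘ id_V
    (∀ v : V,
      (LinearMap.prod (LinearMap.fst K L V)
        (LinearMap.snd K L V - h ∘ₗ LinearMap.fst K L V)) (0, v) = (0, v)) ∧
    -- π₀ ∘ Φ = id_L ∘ π₀
    (∀ p : L × V,
      ((LinearMap.prod (LinearMap.fst K L V)
        (LinearMap.snd K L V - h ∘ₗ LinearMap.fst K L V)) p).1 = p.1) :=
  ⟨bijective_shear h, isBHMorphism_shear hh hθθ', fun _ => by simp,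
    fun _ => rfl⟩

/-- If `θ' = θ + D₁(h)` for a `1`-cochain `h`, then
`Φ(x + v) = x - h(x) + v` is an isomorphism of BiHom-Lie algebras from
`(L ⊕ V, d_θ, α + αV, β + βV)` to `(L ⊕ V, d_{θ'}, α + αV, β + βV)`, and together with the
identity maps on `V` and `L` it gives an equivalence of the standard split abelian
extensions determined by `θ` and `θ'`. -/
theorem stmt11 {K : Type*} [Field K]
    {L : Type*} [AddCommGroup L] [Module K L]
    {V : Type*} [AddCommGroup V] [Module K V]
    (δ : L →ₗ[K] L →ₗ[K] L) (α β : L →ₗ[K] L)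
    (hL : IsBiHomLie δ α β) (hLmul : IsMultiplicative δ α β)
    (αV βV : V →ₗ[K] V)
    (lam_l : L →ₗ[K] V →ₗ[K] V) (lam_r : V →ₗ[K] L →ₗ[K] V)
    (hrep : IsBHRep δ α β αV βV lam_l lam_r)
    (θ θ' : L →ₗ[K] L →ₗ[K] V)
    (hθ : IsBH2Cocycle δ α β lam_l θ) (hθ' : IsBH2Cocycle δ α β lam_l θ')
    (h : L →ₗ[K] V) (hh : IsBH1Cochain α β αV βV h)
    (hθθ' : ∀ x y, θ' x y = θ x y + bhD1 δ lam_l lam_r h x y) :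
    -- Φ(x + v) = x - h(x) + v, i.e. Φ(x, v) = (x, v - h(x))
    Function.Bijective
      (LinearMap.prod (LinearMap.fst K L V)
        (LinearMap.snd K L V - h ∘ₗ LinearMap.fst K L V)) ∧
    IsBHMorphism (bhStd δ lam_l lam_r θ 0)
      (LinearMap.prodMap α αV) (LinearMap.prodMap β βV)
      (bhStd δ lam_l lam_r θ' 0)
      (LinearMap.prodMap α αV) (LinearMap.prodMap β βV)
      (LinearMap.prod (LinearMap.fst K L V)
        (LinearMap.snd K L V - h ∘ₗ LinearMap.fst K L V)) ∧
    -- Φ ∘ i₀ = i₀ ∘ id_V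
    (∀ v : V,
      (LinearMap.prod (LinearMap.fst K L V)
        (LinearMap.snd K L V - h ∘ₗ LinearMap.fst K L V)) (0, v) = (0, v)) ∧
    -- π₀ ∘ Φ = id_L ∘ π₀
    (∀ p : L × V,
      ((LinearMap.prod (LinearMap.fst K L V)
        (LinearMap.snd K L V - h ∘ₗ LinearMap.fst K L V)) p).1 = p.1) :=
  stmt11_general δ α β αV βV lam_l lam_r θ θ' h hh hθθ'
end
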